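/- Let Σ be a real symmetric positive definite Toeplitz (n+1)×(n+1) matrix and let a = Σ^{−1} e_1. If a ≠ 0 then a_0 = e_1ᵀ Σ^{−1} e_1 > 0 and all zeros of the polynomial a_0 z^n + a_1 z^{n−1} + … + a_n lie strictly inside the unit circle. -/

import Mathlib

/-!
Let `⟪x, y⟫ = x* Σ y` on complex vectors. If `z` is a root, synthetic division by `X - z` writes
`a = b - z v` with `b = (w, 0)` and `v = (0, w)`. Since `Σ a = e₁`, `⟪x, a⟫ = conj x₀`; hence
`⟪v, a⟫ = 0`, i.e. `⟪v, b⟫ = z r` with `r = ⟪v, v⟫ > 0`, and `⟪a, a⟫ = ⟪b, a⟫`. As `Σ` is Toeplitz,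
`b` and its shift `v` have the same norm: `⟪b, b⟫ = r`. Therefore
`0 < ⟪a, a⟫ = ⟪b, b⟫ - z ⟪b, v⟫ = r (1 - |z|²)`, so `|z| < 1`.
-/

open Matrix ComplexOrder

/-- A matrix is Toeplitz if its entries depend only on the difference of indices. -/
def IsToeplitz {n : ℕ} (M : Matrix (Fin (n+1)) (Fin (n+1)) ℝ) : Prop :=
  ∀ i j k l : Fin (n+1), (i : ℤ) - (j : ℤ) = (k : ℤ) - (l : ℤ) → M i j = M k l

namespace Fin

/-- Synthetic division by `X - z`: `w` holds the coefficients of the quotient and the appended last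
entry is the remainder `c(z)`. -/
theorem exists_eq_snoc_sub_smul_cons {R : Type*} [CommRing R] {n : ℕ} (c : Fin (n + 1) → R)
    (z : R) : ∃ w : Fin n → R, c = snoc w (∑ k, c k * z ^ (n - k)) - z • cons 0 w := by
  induction n with
  | zero => exact ⟨finZeroElim, by ext k; fin_cases k; simp⟩
  | succ n ih =>
    obtain ⟨w, hw⟩ := ih (init c)
    refine ⟨snoc w (∑ k, init c k * z ^ (n - k)), funext fun k => ?_⟩
    rw [cons_snoc_eq_snoc_cons]
    induction k using lastCases with
    | last =>
      have hpow (k : Fin (n + 1)) : z ^ (n + 1 - k) = z * z ^ (n - k) := by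
        rw [← pow_succ', Nat.sub_add_comm (Nat.lt_succ_iff.mp k.isLt)]
      rw [Pi.sub_apply, Pi.smul_apply, snoc_last, snoc_last, sum_univ_castSucc, smul_eq_mul,
        Finset.mul_sum]
      simp only [init, val_castSucc, val_last, Nat.sub_self, pow_zero, mul_one, hpow,
        mul_left_comm z]
      ring
    | cast i => simpa [init] using congrFun hw i

theorem star_snoc {R : Type*} [Star R] {n : ℕ} (x : Fin n → R) (r : R) :
    star (snoc x r : Fin (n + 1) → R) = snoc (star x) (star r) := by
  ext i
  induction i using lastCases <;> simp

theorem star_cons {R : Type*} [Star R] {n : ℕ} (x : Fin n → R) (r : R) :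
    star (cons r x : Fin (n + 1) → R) = cons (star r) (star x) := by
  ext i
  induction i using Fin.cases <;> simp

end Fin

theorem IsToeplitz.submatrix_castSucc_eq_submatrix_succ {n : ℕ}
    {M : Matrix (Fin (n + 1)) (Fin (n + 1)) ℝ} (hM : IsToeplitz M) :
    M.submatrix Fin.castSucc Fin.castSucc = M.submatrix Fin.succ Fin.succ :=
  Matrix.ext fun _ _ => hM _ _ _ _ (by simp)

namespace Matrix

section Shift

variable {R : Type*} [NonUnitalNonAssocSemiring R] {n : ℕ}

theorem snoc_zero_dotProduct_mulVec_snoc_zero (M : Matrix (Fin (n + 1)) (Fin (n + 1)) R)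
    (x y : Fin n → R) :
    (Fin.snoc x 0 : Fin (n + 1) → R) ⬝ᵥ M *ᵥ Fin.snoc y 0 =
      x ⬝ᵥ M.submatrix Fin.castSucc Fin.castSucc *ᵥ y := by
  simp [dotProduct, mulVec, Fin.sum_univ_castSucc]

theorem cons_zero_dotProduct_mulVec_cons_zero (M : Matrix (Fin (n + 1)) (Fin (n + 1)) R)
    (x y : Fin n → R) :
    (Fin.cons 0 x : Fin (n + 1) → R) ⬝ᵥ M *ᵥ Fin.cons 0 y =
      x ⬝ᵥ M.submatrix Fin.succ Fin.succ *ᵥ y := by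
  simp [dotProduct, mulVec, Fin.sum_univ_succ]

end Shift

variable {ι : Type*} [Fintype ι]

theorem IsHermitian.star_dotProduct_mulVec_conj_symm {R : Type*} [CommRing R] [StarRing R]
    {A : Matrix ι ι R} (hA : A.IsHermitian) (x y : ι → R) :
    star x ⬝ᵥ A *ᵥ y = star (star y ⬝ᵥ A *ᵥ x) := by
  rw [← star_dotProduct, star_mulVec, hA.eq, dotProduct_mulVec]

theorem re_star_dotProduct_map_ofReal_mulVec (S : Matrix ι ι ℝ) (x : ι → ℂ) :
    (star x ⬝ᵥ S.map (↑) *ᵥ x).re =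
      (fun i => (x i).re) ⬝ᵥ S *ᵥ (fun i => (x i).re) +
        (fun i => (x i).im) ⬝ᵥ S *ᵥ (fun i => (x i).im) := by
  simp only [dotProduct, mulVec, Complex.re_sum, Finset.mul_sum, ← Finset.sum_add_distrib]
  refine Finset.sum_congr rfl fun i _ => Finset.sum_congr rfl fun j _ => ?_
  simp only [Pi.star_apply, map_apply, Complex.mul_re, Complex.mul_im, Complex.star_def,
    Complex.conj_re, Complex.conj_im, Complex.ofReal_re, Complex.ofReal_im]
  ring

theorem PosDef.map_ofReal {S : Matrix ι ι ℝ} (hS : S.PosDef) : (S.map ((↑) : ℝ → ℂ)).PosDef := by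
  have hT := hS.isHermitian.map ((↑) : ℝ → ℂ) fun r => by simp
  refine .of_dotProduct_mulVec_pos hT fun x hx =>
    Complex.lt_def.mpr ⟨?_, (hT.im_star_dotProduct_mulVec_self x).symm⟩
  have hnonneg (y : ι → ℝ) : 0 ≤ y ⬝ᵥ S *ᵥ y := by
    simpa using hS.posSemidef.dotProduct_mulVec_nonneg y
  have hpos {y : ι → ℝ} (hy : y ≠ 0) : 0 < y ⬝ᵥ S *ᵥ y := by
    simpa using hS.dotProduct_mulVec_pos hy
  have hre_or_im : (fun i => (x i).re) ≠ 0 ∨ (fun i => (x i).im) ≠ 0 := by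
    by_contra! h
    exact hx (funext fun i => Complex.ext (congrFun h.1 i) (congrFun h.2 i))
  rw [Complex.zero_re, re_star_dotProduct_map_ofReal_mulVec]
  rcases hre_or_im with h | h
  · exact add_pos_of_pos_of_nonneg (hpos h) (hnonneg _)
  · exact add_pos_of_nonneg_of_pos (hnonneg _) (hpos h)

theorem PosDef.norm_lt_one_of_mulVec_eq_single {n : ℕ}
    {T : Matrix (Fin (n + 1)) (Fin (n + 1)) ℂ} (hT : T.PosDef)
    (hshift : T.submatrix Fin.castSucc Fin.castSucc = T.submatrix Fin.succ Fin.succ)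
    {α : Fin (n + 1) → ℂ} (hα : T *ᵥ α = Pi.single 0 1) {z : ℂ}
    (hz : ∑ k, α k * z ^ (n - k) = 0) : ‖z‖ < 1 := by
  have hform_α (x : Fin (n + 1) → ℂ) : star x ⬝ᵥ T *ᵥ α = star (x 0) := by
    rw [hα, dotProduct_single, mul_one, Pi.star_apply]
  have hα0 : α ≠ 0 := by
    rintro rfl
    simpa using congrFun hα 0
  obtain ⟨w, hw⟩ := Fin.exists_eq_snoc_sub_smul_cons α z
  rw [hz] at hw
  set b : Fin (n + 1) → ℂ := Fin.snoc w 0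
  set v : Fin (n + 1) → ℂ := Fin.cons 0 w
  have hv : v ≠ 0 := by
    intro hv
    have hw0 : w = 0 := funext fun i => by simpa [v] using congrFun hv i.succ
    apply hα0
    rw [hw, hv, smul_zero, sub_zero]
    ext i
    induction i using Fin.lastCases <;> simp [b, hw0]
  obtain ⟨r, hr, hvv⟩ : ∃ r : ℝ, 0 < r ∧ (r : ℂ) = star v ⬝ᵥ T *ᵥ v :=
    RCLike.pos_iff_exists_ofReal.mp (hT.dotProduct_mulVec_pos hv)
  have hbb : star b ⬝ᵥ T *ᵥ b = r := by
    rw [hvv, Fin.star_snoc, Fin.star_cons, star_zero, snoc_zero_dotProduct_mulVec_snoc_zero,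
      cons_zero_dotProduct_mulVec_cons_zero, hshift]
  have hvb : star v ⬝ᵥ T *ᵥ b = z * r := by
    have h := hform_α v
    rw [hw, mulVec_sub, dotProduct_sub, mulVec_smul, dotProduct_smul, ← hvv] at h
    simpa [v, sub_eq_zero] using h
  have hbv : star b ⬝ᵥ T *ᵥ v = star z * r := by
    rw [hT.isHermitian.star_dotProduct_mulVec_conj_symm, hvb, star_mul', Complex.star_def,
      Complex.conj_ofReal]
  have hαα : star α ⬝ᵥ T *ᵥ α = (r * (1 - Complex.normSq z) : ℝ) :=
    calc star α ⬝ᵥ T *ᵥ α = star b ⬝ᵥ T *ᵥ α := by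
          rw [show star α = star b - star z • star v by rw [hw, star_sub, star_smul],
            sub_dotProduct, smul_dotProduct, hform_α v]
          simp [v]
      _ = star b ⬝ᵥ T *ᵥ b - z * star b ⬝ᵥ T *ᵥ v := by
          rw [hw, mulVec_sub, dotProduct_sub, mulVec_smul, dotProduct_smul, smul_eq_mul]
      _ = (r * (1 - Complex.normSq z) : ℝ) := by
          rw [hbb, hbv, ← mul_assoc, Complex.star_def, Complex.mul_conj]
          push_cast
          ring
  have h := hT.dotProduct_mulVec_pos hα0
  rw [hαα, Complex.zero_lt_real] at h
  have hnormSq : Complex.normSq z < 1 := by nlinarith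
  rwa [Complex.normSq_eq_norm_sq, sq_lt_one_iff_abs_lt_one, abs_norm] at hnormSq

end Matrix

theorem yule_walker_min_phase_general {n : ℕ}
    (S : Matrix (Fin (n+1)) (Fin (n+1)) ℝ)
    (hpd : S.PosDef) (htoep : IsToeplitz S) :
    let a : Fin (n+1) → ℝ := S⁻¹ *ᵥ ((Pi.single (0 : Fin (n+1)) (1 : ℝ)) : Fin (n+1) → ℝ)
    a ≠ 0 →
      0 < a 0
      ∧ ∀ z : ℂ, (∑ k : Fin (n+1), (a k : ℂ) * z ^ (n - (k : ℕ))) = 0 → ‖z‖ < 1 := by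
  intro a _
  have hSa : S *ᵥ a = Pi.single 0 1 := by
    rw [mulVec_mulVec, mul_nonsing_inv _ hpd.det_pos.ne'.isUnit, one_mulVec]
  refine ⟨?_, fun z hz => hpd.map_ofReal.norm_lt_one_of_mulVec_eq_single ?_ ?_ hz⟩
  · simpa [a] using hpd.inv.dotProduct_mulVec_pos (Pi.single_ne_zero_iff.mpr one_ne_zero)
  · rw [submatrix_map, submatrix_map, htoep.submatrix_castSucc_eq_submatrix_succ]
  · ext i
    calc _ = Complex.ofRealHom ((S *ᵥ a) i) := (Complex.ofRealHom.map_mulVec S a i).symm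
      _ = _ := by rw [hSa]; simp [Pi.single_apply, apply_ite]

/-- The classical Stoica–Nehorai minimum-phase property of the Yule-Walker solution. -/
theorem yule_walker_min_phase {n : ℕ}
    (S : Matrix (Fin (n+1)) (Fin (n+1)) ℝ)
    (hpd : S.PosDef) (hsymm : Sᵀ = S) (htoep : IsToeplitz S) :
    let a : Fin (n+1) → ℝ := S⁻¹ *ᵥ ((Pi.single (0 : Fin (n+1)) (1 : ℝ)) : Fin (n+1) → ℝ)
    a ≠ 0 →
      0 < a 0
      ∧ ∀ z : ℂ, (∑ k : Fin (n+1), (a k : ℂ) * z ^ (n - (k : ℕ))) = 0 → ‖z‖ < 1 :=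
  yule_walker_min_phase_general S hpd htoep
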